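/- The scalar map (a, c) ↦ −c·(a + √(a² + c⁴))/c² for c ≠ 0 (and 0 for c = 0) agrees, for c ≠ 0, with −c·(a + √(a² + c⁴))/c², and if a < 0 whenever c = 0 (the CLF condition), then along any sequence (a_n, c_n) → (a, 0) with a < 0 the formula values converge to 0; i.e., Sontag's formula is continuous at points where c = 0 and a < 0. -/

import Mathlib

/-!
Multiplying numerator and denominator by `√(a² + c⁴) - a` (which is positive once `c ≠ 0`)
rewrites the formula as `-c³ / (√(a² + c⁴) - a)`, an identity that also holds at `c = 0`,
where both sides vanish. The rationalized expression is continuous wherever its denominator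
is nonzero, and at `(a, 0)` the denominator is `|a| - a = -2a`, nonzero exactly when `a < 0`.
-/

open Filter Topology

theorem add_sqrt_sq_add_sq_div_eq (a s : ℝ) (hs : s ≠ 0) :
    (a + √(a ^ 2 + s ^ 2)) / s = s / (√(a ^ 2 + s ^ 2) - a) := by
  have hlt : a < √(a ^ 2 + s ^ 2) :=
    Real.lt_sqrt_of_sq_lt (lt_add_of_pos_right _ (by positivity))
  rw [div_eq_div_iff hs (sub_pos.2 hlt).ne']
  linear_combination Real.sq_sqrt (by positivity : 0 ≤ a ^ 2 + s ^ 2)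

noncomputable def sontagRationalized (a c : ℝ) : ℝ :=
  -c ^ 3 / (√(a ^ 2 + (c ^ 2) ^ 2) - a)

theorem sontag_eq_sontagRationalized (a c : ℝ) :
    (if c = 0 then 0 else -c * (a + √(a ^ 2 + (c ^ 2) ^ 2)) / c ^ 2) =
      sontagRationalized a c := by
  unfold sontagRationalized
  split_ifs with hc
  · simp [hc]
  · rw [mul_div_assoc, add_sqrt_sq_add_sq_div_eq a _ (pow_ne_zero 2 hc)]
    ring

theorem Filter.Tendsto.sontagRationalized {α : Type*} {l : Filter α} {f g : α → ℝ} {a : ℝ}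
    (hf : Tendsto f l (𝓝 a)) (hg : Tendsto g l (𝓝 0)) (ha : a < 0) :
    Tendsto (fun x => sontagRationalized (f x) (g x)) l (𝓝 0) := by
  have hnum : Tendsto (fun x => -g x ^ 3) l (𝓝 0) := by simpa using (hg.pow 3).neg
  have hden : Tendsto (fun x => √(f x ^ 2 + (g x ^ 2) ^ 2) - f x) l
      (𝓝 (√(a ^ 2 + ((0 : ℝ) ^ 2) ^ 2) - a)) :=
    ((hf.pow 2).add ((hg.pow 2).pow 2)).sqrt.sub hf
  have hden_ne : √(a ^ 2 + ((0 : ℝ) ^ 2) ^ 2) - a ≠ 0 := by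
    rw [zero_pow two_ne_zero, zero_pow two_ne_zero, add_zero, Real.sqrt_sq_eq_abs, abs_of_neg ha]
    linarith
  rw [← zero_div (√(a ^ 2 + ((0 : ℝ) ^ 2) ^ 2) - a)]
  exact hnum.div hden hden_ne

/-- Sontag's universal formula `S(a,c) = −c (a + √(a² + σ²))/σ` with `σ = c²` for
`c ≠ 0`, and `S(a,0) = 0`: for `c ≠ 0` it agrees with the closed form, and if
`a < 0`, then along any sequence `(aₙ, cₙ) → (a, 0)` the values `S(aₙ, cₙ)`
converge to `0`; i.e., Sontag's formula is continuous at `(a, 0)` when `a < 0`. -/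
theorem sontag_formula_continuity
    (S : ℝ → ℝ → ℝ)
    (hS : ∀ a c : ℝ, S a c =
      if c = 0 then 0
      else -c * (a + Real.sqrt (a ^ 2 + (c ^ 2) ^ 2)) / c ^ 2) :
    (∀ a c : ℝ, c ≠ 0 →
        S a c = -c * (a + Real.sqrt (a ^ 2 + (c ^ 2) ^ 2)) / c ^ 2) ∧
      (∀ a : ℝ, a < 0 → ∀ an cn : ℕ → ℝ,
        Filter.Tendsto an Filter.atTop (nhds a) →
        Filter.Tendsto cn Filter.atTop (nhds 0) →
        Filter.Tendsto (fun n => S (an n) (cn n)) Filter.atTop (nhds 0)) := by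
  refine ⟨fun a c hc => by rw [hS, if_neg hc], fun a ha an cn han hcn => ?_⟩
  have hS' : ∀ a c, S a c = sontagRationalized a c := fun a c =>
    (hS a c).trans (sontag_eq_sontagRationalized a c)
  simpa only [hS'] using han.sontagRationalized hcn ha
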